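/- arXiv:2007.07240 — 5 statements merged into one kernel-verified Lean document; each statement's English description precedes it below -/
import Mathlib

section
/- In any edge-coloring (with any number of colors) of a finite complete graph on at least 2 vertices that contains no rainbow triangle, there exists a partition of the vertex set into at least two nonempty parts such that: (a) for each pair of distinct parts, all edges between the two parts have the same color, and (b) at most two colors in total appear on edges between different parts. -/
open Finset

/-- A symmetric edge-coloring of a complete graph (given as a function on ordered pairs). -/
def IsSymm2 {V C : Type*} (c : V → V → C) : Prop := ∀ a b : V, c a b = c b a

/-- The coloring contains a rainbow triangle: three vertices whose three pairwise
edges receive three distinct colors. -/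
def HasRainbowTriangle {V C : Type*} (c : V → V → C) : Prop :=
  ∃ a b d : V, a ≠ b ∧ a ≠ d ∧ b ≠ d ∧
    c a b ≠ c a d ∧ c a b ≠ c b d ∧ c a d ≠ c b d

/-- The coloring contains a monochromatic star `K_{1,n}`: a center `v` with `n`
incident edges of a single color. -/
def HasMonoStar {V C : Type*} (c : V → V → C) (n : ℕ) : Prop :=
  ∃ (i : C) (v : V) (S : Finset V), S.card = n ∧ v ∉ S ∧ ∀ x ∈ S, c v x = i

/-- The coloring contains a monochromatic copy of `K_{1,n} ∪ K_{1,m}`: two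
vertex-disjoint stars of the same color with `n` and `m` leaves respectively. -/
def HasMonoTwoStars {V C : Type*} (c : V → V → C) (n m : ℕ) : Prop :=
  ∃ (i : C) (u v : V) (S T : Finset V), u ≠ v ∧ S.card = n ∧ T.card = m ∧
    Disjoint S T ∧ u ∉ S ∧ u ∉ T ∧ v ∉ S ∧ v ∉ T ∧
    (∀ x ∈ S, c u x = i) ∧ (∀ y ∈ T, c v y = i)

/-!
Join two vertices of `S` when the color of their edge lies outside a set `K` of colors. The key
step is that some pair `K = {i, j}` leaves `S` disconnected. Add the vertices one at a time: when
`v` is added to `S`, either some component of `S` receives no edge from `v` with color outside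
`K`, and it stays separated, or every component does; then the absence of rainbow triangles
forces all edges at `v` to use only two colors `d, k`, and `v` is isolated for `K = {d, k}`.
Given such `i, j`, the components are the parts: edges between different components have colors
in `{i, j}`, and a triangle argument shows the color is constant between two components.
-/

theorem Equivalence.not_rel_or_not_rel {α : Type*} {r : α → α → Prop} (hr : Equivalence r)
    {x₀ y₀ : α} (h₀ : ¬ r x₀ y₀) (x : α) : ¬ r x x₀ ∨ ¬ r x y₀ := by
  by_contra! h
  exact h₀ (hr.trans (hr.symm h.1) h.2)

theorem Equivalence.apply_eq_of_forall_not_rel {α β : Type*} {r : α → α → Prop}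
    (hr : Equivalence r) {T : Set α} {f : α → β} {x₀ y₀ : α} (hx₀ : x₀ ∈ T) (hy₀ : y₀ ∈ T)
    (h₀ : ¬ r x₀ y₀) (hf : ∀ x ∈ T, ∀ y ∈ T, ¬ r x y → f x = f y) {x y : α}
    (hx : x ∈ T) (hy : y ∈ T) : f x = f y := by
  by_cases hxy : r x y
  · rcases hr.not_rel_or_not_rel h₀ x with hz | hz
    · exact (hf x hx x₀ hx₀ hz).trans (hf y hy x₀ hx₀ fun h => hz (hr.trans hxy h)).symm
    · exact (hf x hx y₀ hy₀ hz).trans (hf y hy y₀ hy₀ fun h => hz (hr.trans hxy h)).symm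
  · exact hf x hx y hy hxy

namespace Finpartition

variable {α : Type*} [Fintype α] [DecidableEq α] {s : Setoid α} [DecidableRel s.r]
  {p q : Finset α} {a b : α}

theorem rel_of_mem_ofSetoid (hp : p ∈ (ofSetoid s).parts) (ha : a ∈ p) (hb : b ∈ p) : s a b := by
  rw [← mem_part_ofSetoid_iff_rel, part_eq_of_mem _ hp ha]
  exact hb

theorem not_rel_of_mem_ofSetoid (hp : p ∈ (ofSetoid s).parts) (hq : q ∈ (ofSetoid s).parts)
    (hpq : p ≠ q) (ha : a ∈ p) (hb : b ∈ q) : ¬ s a b := by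
  rw [← mem_part_ofSetoid_iff_rel, part_eq_of_mem _ hp ha]
  exact fun hbp => hpq (eq_of_mem_parts _ hp hq hbp hb)

end Finpartition

section Coloring

variable {V C : Type*} {c : V → V → C}

theorem color_eq_of_not_hasRainbowTriangle (hrb : ¬ HasRainbowTriangle c) {x y z : V}
    (hxy : x ≠ y) (hxz : x ≠ z) (hyz : y ≠ z) (hy : c x y ≠ c y z) (hz : c x z ≠ c y z) :
    c x y = c x z := by
  by_contra h
  exact hrb ⟨x, y, z, hxy, hxz, hyz, h, hy, hz⟩

def otherColorsGraph (c : V → V → C) (S : Finset V) (K : Set C) : SimpleGraph V :=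
  SimpleGraph.fromRel fun x y => x ∈ S ∧ y ∈ S ∧ c x y ∉ K

section OtherColorsGraph

variable {S : Finset V} {K : Set C} {a a' b b' x y : V}

local notation "G" => otherColorsGraph c S K

theorem otherColorsGraph_adj (hsymm : IsSymm2 c) :
    (G).Adj x y ↔ x ≠ y ∧ x ∈ S ∧ y ∈ S ∧ c x y ∉ K := by
  simp only [otherColorsGraph, SimpleGraph.fromRel_adj, hsymm y x]
  tauto

theorem color_mem_of_not_reachable (hsymm : IsSymm2 c) (hx : x ∈ S) (hy : y ∈ S)
    (h : ¬ (G).Reachable x y) : c x y ∈ K := by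
  by_contra hK
  have hxy : x ≠ y := by
    rintro rfl
    exact h .rfl
  exact h ((otherColorsGraph_adj hsymm).2 ⟨hxy, hx, hy, hK⟩).reachable

theorem color_eq_of_reachable (hsymm : IsSymm2 c) (hrb : ¬ HasRainbowTriangle c) (hb : b ∈ S)
    (hab : ¬ (G).Reachable a b) (haa' : (G).Reachable a a') : c b a = c b a' := by
  rw [SimpleGraph.reachable_iff_reflTransGen] at haa'
  induction haa' with
  | refl => rfl
  | @tail x y hax hxy ih =>
    obtain ⟨hne, hx, hy, hxyK⟩ := (otherColorsGraph_adj hsymm).1 hxy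
    have hax' := (SimpleGraph.reachable_iff_reflTransGen _ _).2 hax
    have hbx : ¬ (G).Reachable b x := fun h => hab (hax'.trans h.symm)
    have hby : ¬ (G).Reachable b y := fun h => hab ((hax'.trans hxy.reachable).trans h.symm)
    rw [ih]
    refine color_eq_of_not_hasRainbowTriangle hrb (fun h => hbx (h ▸ .rfl))
      (fun h => hby (h ▸ .rfl)) hne ?_ ?_
    · exact ne_of_mem_of_not_mem (color_mem_of_not_reachable hsymm hb hx hbx) hxyK
    · exact ne_of_mem_of_not_mem (color_mem_of_not_reachable hsymm hb hy hby) hxyK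

theorem color_eq_of_reachable_of_reachable (hsymm : IsSymm2 c) (hrb : ¬ HasRainbowTriangle c)
    (ha' : a' ∈ S) (hb : b ∈ S) (hab : ¬ (G).Reachable a b) (haa' : (G).Reachable a a')
    (hbb' : (G).Reachable b b') : c a b = c a' b' := by
  have ha'b : ¬ (G).Reachable b a' := fun h => hab (h.trans haa'.symm).symm
  calc c a b = c b a := hsymm a b
    _ = c b a' := color_eq_of_reachable hsymm hrb hb hab haa'
    _ = c a' b := hsymm b a'
    _ = c a' b' := color_eq_of_reachable hsymm hrb ha' ha'b hbb'

theorem not_reachable_of_color_mem (hsymm : IsSymm2 c) {A : Set V}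
    (hA : ∀ a ∈ A, ∀ b ∈ S, b ∉ A → c a b ∈ K) (ha : a ∈ A) (hb : b ∉ A) :
    ¬ (G).Reachable a b := by
  rw [SimpleGraph.reachable_iff_reflTransGen]
  intro hab
  refine hb ?_
  clear hb
  induction hab with
  | refl => exact ha
  | @tail x y _ hxy hxA =>
    obtain ⟨-, -, hy, hxyK⟩ := (otherColorsGraph_adj hsymm).1 hxy
    by_contra hyA
    exact hxyK (hA x hxA y hy hyA)

end OtherColorsGraph

section AddVertex

variable {S : Finset V} {K : Set C} {v : V}

local notation "G" => otherColorsGraph c S K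

theorem not_reachable_insert_of_color_mem [DecidableEq V] (hsymm : IsSymm2 c) (hv : v ∉ S)
    (hK : ∀ x ∈ S, c v x ∈ K) {a : V} (ha : a ∈ S) :
    ¬ (otherColorsGraph c (insert v S) K).Reachable v a := by
  refine not_reachable_of_color_mem hsymm (A := {v}) ?_ rfl fun h => hv (h ▸ ha)
  rintro _ rfl b hb hbv
  exact hK b ((mem_insert.1 hb).resolve_left hbv)

theorem not_reachable_insert_of_forall_not_reachable [DecidableEq V] (hsymm : IsSymm2 c)
    (hv : v ∉ S) {b : V} (hb : b ∈ S) (hbK : ∀ z ∈ S, c v z ∉ K → ¬ (G).Reachable z b) :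
    ¬ (otherColorsGraph c (insert v S) K).Reachable v b := by
  refine not_reachable_of_color_mem hsymm
    (A := {x | x = v ∨ x ∈ S ∧ ∃ z ∈ S, c v z ∉ K ∧ (G).Reachable z x}) ?_ (.inl rfl) ?_
  · rintro a ha y hy hyA
    have hyS : y ∈ S := (mem_insert.1 hy).resolve_left fun h => hyA (.inl h)
    rcases ha with rfl | ⟨haS, z, hz, hzK, hza⟩
    · by_contra hyK
      exact hyA (.inr ⟨hyS, y, hyS, hyK, .rfl⟩)
    · exact color_mem_of_not_reachable hsymm haS hyS
        fun h => hyA (.inr ⟨hyS, z, hz, hzK, hza.trans h⟩)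
  · rintro (rfl | ⟨-, z, hz, hzK, hzb⟩)
    · exact hv hb
    · exact hbK z hz hzK hzb

theorem color_eq_of_not_reachable (hsymm : IsSymm2 c) (hrb : ¬ HasRainbowTriangle c)
    (hv : v ∉ S) (hN : ∀ y ∈ S, ∃ z ∈ S, c v z ∉ K ∧ (G).Reachable z y) {x y : V}
    (hx : x ∈ S) (hxK : c v x ∈ K) (hy : y ∈ S) (hxy : ¬ (G).Reachable x y) :
    c v x = c x y := by
  obtain ⟨z, hz, hzK, hzy⟩ := hN y hy
  have hxz : ¬ (G).Reachable x z := fun h => hxy (h.trans hzy)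
  have hxzK : c x z ∈ K := color_mem_of_not_reachable hsymm hx hz hxz
  calc c v x = c x v := hsymm v x
    _ = c x z := color_eq_of_not_hasRainbowTriangle hrb (fun h => hv (h ▸ hx))
        (fun h => hxz (h ▸ .rfl)) (fun h => hv (h ▸ hz))
        (ne_of_mem_of_not_mem (hsymm x v ▸ hxK) hzK) (ne_of_mem_of_not_mem hxzK hzK)
    _ = c x y := color_eq_of_reachable hsymm hrb hx (fun h => hxz h.symm) hzy

theorem color_eq_of_color_mem (hsymm : IsSymm2 c) (hrb : ¬ HasRainbowTriangle c)
    (hv : v ∉ S) (hN : ∀ y ∈ S, ∃ z ∈ S, c v z ∉ K ∧ (G).Reachable z y) {a₀ b₀ : V}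
    (ha₀ : a₀ ∈ S) (hb₀ : b₀ ∈ S) (h₀ : ¬ (G).Reachable a₀ b₀) {x x' : V}
    (hx : x ∈ S) (hxK : c v x ∈ K) (hx' : x' ∈ S) (hx'K : c v x' ∈ K) : c v x = c v x' := by
  by_cases hxx' : (G).Reachable x x'
  · obtain ⟨y, hy, hxy⟩ : ∃ y ∈ S, ¬ (G).Reachable x y :=
      (G).reachable_is_equivalence.not_rel_or_not_rel h₀ x |>.elim
        (fun h => ⟨a₀, ha₀, h⟩) (fun h => ⟨b₀, hb₀, h⟩)
    have hx'y : ¬ (G).Reachable x' y := fun h => hxy (hxx'.trans h)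
    calc c v x = c x y := color_eq_of_not_reachable hsymm hrb hv hN hx hxK hy hxy
      _ = c x' y := color_eq_of_reachable_of_reachable hsymm hrb hx' hy hxy hxx' .rfl
      _ = c v x' := (color_eq_of_not_reachable hsymm hrb hv hN hx' hx'K hy hx'y).symm
  · calc c v x = c x x' := color_eq_of_not_reachable hsymm hrb hv hN hx hxK hx' hxx'
      _ = c x' x := hsymm x x'
      _ = c v x' :=
        (color_eq_of_not_reachable hsymm hrb hv hN hx' hx'K hx fun h => hxx' h.symm).symm

theorem color_eq_of_color_not_mem (hsymm : IsSymm2 c) (hrb : ¬ HasRainbowTriangle c)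
    (hv : v ∉ S) {z₁ z₂ : V} (hz₁ : z₁ ∈ S) (hz₁K : c v z₁ ∉ K) (hz₂ : z₂ ∈ S)
    (hz₂K : c v z₂ ∉ K) (h₁₂ : ¬ (G).Reachable z₁ z₂) {z w : V} (hz : z ∈ S) (hzK : c v z ∉ K)
    (hw : w ∈ S) (hwK : c v w ∉ K) : c v z = c v w := by
  refine (G).reachable_is_equivalence.apply_eq_of_forall_not_rel (T := {x | x ∈ S ∧ c v x ∉ K})
    ⟨hz₁, hz₁K⟩ ⟨hz₂, hz₂K⟩ h₁₂ ?_ ⟨hz, hzK⟩ ⟨hw, hwK⟩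
  rintro x ⟨hx, hxK⟩ y ⟨hy, hyK⟩ hxy
  have hxyK : c x y ∈ K := color_mem_of_not_reachable hsymm hx hy hxy
  exact color_eq_of_not_hasRainbowTriangle hrb (fun h => hv (h ▸ hx)) (fun h => hv (h ▸ hy))
    (fun h => hxy (h ▸ .rfl)) (ne_of_mem_of_not_mem hxyK hxK).symm
    (ne_of_mem_of_not_mem hxyK hyK).symm

theorem exists_pair_color_mem_of_forall_reachable (hsymm : IsSymm2 c)
    (hrb : ¬ HasRainbowTriangle c) (hv : v ∉ S) {a₀ b₀ : V} (ha₀ : a₀ ∈ S) (hb₀ : b₀ ∈ S)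
    (h₀ : ¬ (G).Reachable a₀ b₀) (hN : ∀ y ∈ S, ∃ z ∈ S, c v z ∉ K ∧ (G).Reachable z y) :
    ∃ d k : C, ∀ x ∈ S, c v x ∈ ({d, k} : Set C) := by
  obtain ⟨z₁, hz₁, hz₁K, h₁⟩ := hN a₀ ha₀
  obtain ⟨z₂, hz₂, hz₂K, h₂⟩ := hN b₀ hb₀
  have h₁₂ : ¬ (G).Reachable z₁ z₂ := fun h => h₀ (h₁.symm.trans (h.trans h₂))
  have hk : ∀ z ∈ S, c v z ∉ K → c v z = c v z₁ := fun z hz hzK =>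
    color_eq_of_color_not_mem hsymm hrb hv hz₁ hz₁K hz₂ hz₂K h₁₂ hz hzK hz₁ hz₁K
  by_cases hB : ∃ x₀ ∈ S, c v x₀ ∈ K
  · obtain ⟨x₀, hx₀, hx₀K⟩ := hB
    refine ⟨c v x₀, c v z₁, fun x hx => ?_⟩
    by_cases hxK : c v x ∈ K
    · exact .inl (color_eq_of_color_mem hsymm hrb hv hN ha₀ hb₀ h₀ hx hxK hx₀ hx₀K)
    · exact .inr (hk x hx hxK)
  · push Not at hB
    exact ⟨c v z₁, c v z₁, fun x hx => .inr (hk x hx (hB x hx))⟩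

end AddVertex

theorem exists_not_reachable [DecidableEq V] (hsymm : IsSymm2 c) (hrb : ¬ HasRainbowTriangle c)
    {S : Finset V} (hS : 2 ≤ #S) :
    ∃ i j : C, ∃ a ∈ S, ∃ b ∈ S, ¬ (otherColorsGraph c S {i, j}).Reachable a b := by
  induction S using Finset.induction_on with
  | empty => simp at hS
  | insert v S hv ih =>
    rw [card_insert_of_notMem hv] at hS
    have hvS : v ∈ insert v S := mem_insert_self v S
    by_cases hS2 : 2 ≤ #S
    · obtain ⟨i, j, a₀, ha₀, b₀, hb₀, h₀⟩ := ih hS2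
      by_cases hN : ∃ b ∈ S, ∀ z ∈ S, c v z ∉ ({i, j} : Set C) →
          ¬ (otherColorsGraph c S {i, j}).Reachable z b
      · obtain ⟨b, hb, hbN⟩ := hN
        exact ⟨i, j, v, hvS, b, mem_insert_of_mem hb,
          not_reachable_insert_of_forall_not_reachable hsymm hv hb hbN⟩
      · push Not at hN
        obtain ⟨d, k, hdk⟩ :=
          exists_pair_color_mem_of_forall_reachable hsymm hrb hv ha₀ hb₀ h₀ hN
        exact ⟨d, k, v, hvS, a₀, mem_insert_of_mem ha₀,
          not_reachable_insert_of_color_mem hsymm hv hdk ha₀⟩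
    · obtain ⟨a, rfl⟩ := card_eq_one.1 (by omega : #S = 1)
      exact ⟨c v a, c v a, v, hvS, a, by simp,
        not_reachable_insert_of_color_mem hsymm hv (K := {c v a, c v a}) (by simp)
          (mem_singleton_self a)⟩

end Coloring

/-- Gallai's theorem: any rainbow-triangle-free edge-coloring of a complete graph
on at least 2 vertices admits a nontrivial partition where edges between any two
parts are monochromatic and at most two colors appear between parts. -/
theorem gallai_partition {V C : Type*} [Fintype V] [DecidableEq V]
    (hV : 2 ≤ Fintype.card V) (c : V → V → C) (hsymm : IsSymm2 c)
    (hrb : ¬ HasRainbowTriangle c) :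
    ∃ P : Finpartition (Finset.univ : Finset V),
      2 ≤ P.parts.card ∧
      (∀ p ∈ P.parts, ∀ q ∈ P.parts, p ≠ q → ∃ i : C, ∀ a ∈ p, ∀ b ∈ q, c a b = i) ∧
      ∃ i j : C, ∀ p ∈ P.parts, ∀ q ∈ P.parts, p ≠ q →
        ∀ a ∈ p, ∀ b ∈ q, c a b = i ∨ c a b = j := by
  classical
  obtain ⟨i, j, a, -, b, -, hab⟩ := exists_not_reachable hsymm hrb (S := univ) (by simpa)
  set G := otherColorsGraph c univ {i, j}
  set P := Finpartition.ofSetoid G.reachableSetoid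
  refine ⟨P, ?_, ?_, i, j, ?_⟩
  · refine one_lt_card.2 ⟨P.part a, P.part_mem.2 (mem_univ a), P.part b,
      P.part_mem.2 (mem_univ b), fun h => hab ?_⟩
    exact Finpartition.mem_part_ofSetoid_iff_rel.1 (h ▸ P.mem_part (mem_univ b))
  · intro p hp q hq hpq
    obtain ⟨a₁, ha₁⟩ := P.nonempty_of_mem_parts hp
    obtain ⟨b₁, hb₁⟩ := P.nonempty_of_mem_parts hq
    exact ⟨c a₁ b₁, fun a ha b hb => color_eq_of_reachable_of_reachable hsymm hrb (mem_univ _)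
      (mem_univ _) (Finpartition.not_rel_of_mem_ofSetoid hp hq hpq ha hb)
      (Finpartition.rel_of_mem_ofSetoid hp ha ha₁) (Finpartition.rel_of_mem_ofSetoid hq hb hb₁)⟩
  · intro p hp q hq hpq a ha b hb
    simpa using color_mem_of_not_reachable hsymm (mem_univ a) (mem_univ b)
      (Finpartition.not_rel_of_mem_ofSetoid hp hq hpq ha hb)
end

section
/- Let n and r be positive integers with n ≥ 22 and 4 ≤ r ≤ (n+4)/4. Let G be an edge-coloring of the complete graph on (5n−r)/2 vertices with no rainbow triangle, and suppose G contains no monochromatic copy of the star K_{1,n}. Then for any Gallai partition of G chosen with the minimum number of parts: the partition has exactly 5 parts, each part has order at least (n−r+3)/2, and every vertex has at least n−r+3 incident edges in each of the two colors appearing between the parts going to vertices in other parts. -/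
open Finset

/-- A Gallai partition: a partition into at least two parts such that edges between
each pair of distinct parts are monochromatic and at most two colors appear on
inter-part edges. -/
def IsGallaiPartition {V C : Type*} [Fintype V] [DecidableEq V]
    (c : V → V → C) (P : Finpartition (Finset.univ : Finset V)) : Prop :=
  2 ≤ P.parts.card ∧
  (∀ p ∈ P.parts, ∀ q ∈ P.parts, p ≠ q → ∃ i : C, ∀ a ∈ p, ∀ b ∈ q, c a b = i) ∧
  ∃ i j : C, ∀ p ∈ P.parts, ∀ q ∈ P.parts, p ≠ q →
    ∀ a ∈ p, ∀ b ∈ q, c a b = i ∨ c a b = j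

lemma cherry4 {C : Type*} {i j : C} (hij : i ≠ j) {K12 K13 K14 K23 K24 K34 : C}
    (h12 : K12 = i ∨ K12 = j) (h13 : K13 = i ∨ K13 = j) (h14 : K14 = i ∨ K14 = j)
    (h23 : K23 = i ∨ K23 = j) (h24 : K24 = i ∨ K24 = j) (h34 : K34 = i ∨ K34 = j) :
    ((K13 = K14 ∨ K23 = K24) ∧ (K13 = K23 ∨ K14 = K24)) ∨
    ((K12 = K14 ∨ K23 = K34) ∧ (K12 = K23 ∨ K14 = K34)) ∨
    ((K12 = K13 ∨ K24 = K34) ∧ (K12 = K24 ∨ K13 = K34)) ∨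
    (K12 = K13 ∧ K13 = K14) ∨ (K12 = K23 ∧ K23 = K24) ∨
    (K13 = K23 ∧ K23 = K34) ∨ (K14 = K24 ∧ K24 = K34) := by
  rcases h12 with h|h <;> subst h <;> rcases h13 with h|h <;> subst h <;>
    rcases h14 with h|h <;> subst h <;> rcases h23 with h|h <;> subst h <;>
    rcases h24 with h|h <;> subst h <;> rcases h34 with h|h <;> subst h <;> tauto

lemma pair_eq {C : Type*} {i j x y z : C}
    (hx : x = i ∨ x = j) (hy : y = i ∨ y = j) (hz : z = i ∨ z = j)
    (h1 : x ≠ y) (h2 : x ≠ z) : y = z := by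
  rcases hx with rfl|rfl <;> rcases hy with rfl|rfl <;> rcases hz with rfl|rfl <;> tauto


/-- Star stability lemma: for `n ≥ 22` and `4 ≤ r ≤ (n+4)/4`, a Gallai coloring of a
complete graph on `(5n-r)/2` vertices with no monochromatic `K_{1,n}` has, in any
Gallai partition with the minimum number of parts, exactly 5 parts, each of order at
least `(n-r+3)/2`, and every vertex has at least `n-r+3` incident edges to other parts
in each of the two colors of the partition. -/
theorem star_stability {C : Type*} (n r M : ℕ) (hn : 22 ≤ n) (hr : 4 ≤ r)
    (hr' : 4 * r ≤ n + 4) (hM : 2 * M = 5 * n - r)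
    (c : Fin M → Fin M → C) (hsymm : IsSymm2 c) (hrb : ¬ HasRainbowTriangle c)
    (hstar : ¬ HasMonoStar c n)
    (P : Finpartition (Finset.univ : Finset (Fin M))) (hP : IsGallaiPartition c P)
    (hmin : ∀ Q : Finpartition (Finset.univ : Finset (Fin M)),
      IsGallaiPartition c Q → P.parts.card ≤ Q.parts.card) :
    P.parts.card = 5 ∧
    (∀ p ∈ P.parts, n - r + 3 ≤ 2 * p.card) ∧
    ∃ i j : C, i ≠ j ∧
      (∀ p ∈ P.parts, ∀ q ∈ P.parts, p ≠ q → ∀ a ∈ p, ∀ b ∈ q, c a b = i ∨ c a b = j) ∧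
      ∀ v : Fin M,
        (∃ S : Finset (Fin M), n - r + 3 ≤ S.card ∧
          ∀ u ∈ S, (∀ p ∈ P.parts, v ∈ p → u ∉ p) ∧ c v u = i) ∧
        (∃ S : Finset (Fin M), n - r + 3 ≤ S.card ∧
          ∀ u ∈ S, (∀ p ∈ P.parts, v ∈ p → u ∉ p) ∧ c v u = j) := by
  classical
  obtain ⟨hk2, hmonoP, i, j, hij2⟩ := hP
  have hrn : r ≤ n := by omega
  have hM0 : 0 < M := by omega
  -- representatives of parts
  set rep : Finset (Fin M) → Fin M :=
    fun p => if h : p.Nonempty then h.choose else ⟨0, hM0⟩ with hrepdef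
  have hrepmem : ∀ p ∈ P.parts, rep p ∈ p := by
    intro p hp
    have h := P.nonempty_of_mem_parts hp
    simp only [hrepdef, dif_pos h]
    exact h.choose_spec
  -- reduced coloring
  set K : Finset (Fin M) → Finset (Fin M) → C := fun p q => c (rep p) (rep q) with hKdef
  have hKval : ∀ p ∈ P.parts, ∀ q ∈ P.parts, p ≠ q → ∀ a ∈ p, ∀ b ∈ q, c a b = K p q := by
    intro p hp q hq hne a ha b hb
    obtain ⟨x, hx⟩ := hmonoP p hp q hq hne
    rw [hx a ha b hb, hKdef]
    exact (hx (rep p) (hrepmem p hp) (rep q) (hrepmem q hq)).symm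
  have hKsymm : ∀ p q, K p q = K q p := fun p q => hsymm _ _
  have hKij : ∀ p ∈ P.parts, ∀ q ∈ P.parts, p ≠ q → K p q = i ∨ K p q = j :=
    fun p hp q hq hne => hij2 p hp q hq hne _ (hrepmem p hp) _ (hrepmem q hq)
  clear_value K
  clear hKdef
  -- star bound
  have hstar' : ∀ (v : Fin M) (x : C) (S : Finset (Fin M)),
      v ∉ S → (∀ u ∈ S, c v u = x) → S.card < n := by
    intro v x S hv hS
    by_contra h
    push_neg at h
    obtain ⟨T, hTS, hT⟩ := Finset.exists_subset_card_eq h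
    exact hstar ⟨x, v, T, hT, fun hvT => hv (hTS hvT), fun u hu => hS u (hTS hu)⟩
  have hpart : ∀ u : Fin M, ∃ q ∈ P.parts, u ∈ q := fun u => P.exists_mem (mem_univ u)
  have hdisjF : ∀ p ∈ P.parts, ∀ q ∈ P.parts, p ≠ q → Disjoint p q :=
    fun p hp q hq hne => P.disjoint hp hq hne
  have hdisj : ∀ p ∈ P.parts, ∀ q ∈ P.parts, p ≠ q → ∀ a ∈ p, a ∉ q := by
    intro p hp q hq hne a ha hq'
    exact (Finset.disjoint_left.mp (hdisjF p hp q hq hne)) ha hq'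
  have huniq : ∀ p ∈ P.parts, ∀ q ∈ P.parts, ∀ a, a ∈ p → a ∈ q → p = q := by
    intro p hp q hq a ha ha'
    by_contra hne
    exact hdisj p hp q hq hne a ha ha'
  have hcardeq : ∀ p : Finset (Fin M), (univ \ p).card + p.card = M := by
    intro p
    rw [Finset.card_sdiff_add_card_eq_card (subset_univ p), card_univ, Fintype.card_fin]
  -- i ≠ j
  by_cases hijeq : i = j
  · exfalso
    have hall : ∀ p ∈ P.parts, (univ \ p).card < n := by
      intro p hp
      refine hstar' (rep p) i _ (by simp [hrepmem p hp]) ?_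
      intro u hu
      obtain ⟨q, hq, huq⟩ := hpart u
      have hne : p ≠ q := by
        rintro rfl
        exact (mem_sdiff.mp hu).2 huq
      rcases hKij p hp q hq hne with h | h
      · rw [hKval p hp q hq hne _ (hrepmem p hp) u huq, h]
      · rw [hKval p hp q hq hne _ (hrepmem p hp) u huq, h, hijeq]
    obtain ⟨p, hp, q, hq, hpq⟩ := Finset.one_lt_card.mp hk2
    have h1 := hall p hp
    have h2 := hall q hq
    have e1 := hcardeq p
    have e2 := hcardeq q
    have e3 : p.card + q.card ≤ M := by
      calc p.card + q.card = (p ∪ q).card :=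
            (Finset.card_union_of_disjoint (hdisjF p hp q hq hpq)).symm
        _ ≤ (univ : Finset (Fin M)).card := Finset.card_le_univ _
        _ = M := by rw [card_univ, Fintype.card_fin]
    omega
  -- part size lower bound
  have hsize : ∀ p ∈ P.parts, (univ \ p).card ≤ 2 * n - 2 := by
    intro p hp
    have hv : rep p ∈ p := hrepmem p hp
    have hcol : ∀ u ∈ univ \ p, c (rep p) u = i ∨ c (rep p) u = j := by
      intro u hu
      obtain ⟨q, hq, huq⟩ := hpart u
      have hne : p ≠ q := by
        rintro rfl
        exact (mem_sdiff.mp hu).2 huq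
      exact hij2 p hp q hq hne _ hv u huq
    have hA := hstar' (rep p) i ((univ \ p).filter (fun u => c (rep p) u = i))
      (by simp [hv]) (fun u hu => (mem_filter.mp hu).2)
    have hB := hstar' (rep p) j ((univ \ p).filter (fun u => ¬ c (rep p) u = i))
      (by simp [hv]) ?_
    · have := Finset.card_filter_add_card_filter_not
        (s := univ \ p) (p := fun u => c (rep p) u = i)
      omega
    · intro u hu
      obtain ⟨hu1, hu2⟩ := mem_filter.mp hu
      rcases hcol u hu1 with h | h
      · exact absurd h hu2
      · exact h
  have hsize2 : ∀ p ∈ P.parts, n - r + 4 ≤ 2 * p.card := by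
    intro p hp
    have h1 := hsize p hp
    have e1 := hcardeq p
    omega
  -- pair bound: two same-colored neighbor parts sum to < n
  have hpair : ∀ p ∈ P.parts, ∀ q1 ∈ P.parts, ∀ q2 ∈ P.parts,
      p ≠ q1 → p ≠ q2 → q1 ≠ q2 → K p q1 = K p q2 → q1.card + q2.card < n := by
    intro p hp q1 hq1 q2 hq2 h1 h2 h12 he
    have hcard : (q1 ∪ q2).card = q1.card + q2.card :=
      Finset.card_union_of_disjoint (hdisjF q1 hq1 q2 hq2 h12)
    have := hstar' (rep p) (K p q1) (q1 ∪ q2) ?_ ?_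
    · omega
    · intro hmem
      rcases mem_union.mp hmem with h | h
      · exact hdisj q1 hq1 p hp (Ne.symm h1) _ h (hrepmem p hp)
      · exact hdisj q2 hq2 p hp (Ne.symm h2) _ h (hrepmem p hp)
    · intro u hu
      rcases mem_union.mp hu with h | h
      · exact hKval p hp q1 hq1 h1 _ (hrepmem p hp) u h
      · rw [he]; exact hKval p hp q2 hq2 h2 _ (hrepmem p hp) u h
  -- no part has three same-colored neighbor parts
  have hdeg3 : ∀ p ∈ P.parts, ∀ q1 ∈ P.parts, ∀ q2 ∈ P.parts, ∀ q3 ∈ P.parts,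
      p ≠ q1 → p ≠ q2 → p ≠ q3 → q1 ≠ q2 → q1 ≠ q3 → q2 ≠ q3 →
      K p q1 = K p q2 → K p q2 = K p q3 → False := by
    intro p hp q1 hq1 q2 hq2 q3 hq3 h1 h2 h3 h12 h13 h23 e1 e2
    have hd12 := hdisjF q1 hq1 q2 hq2 h12
    have hd13 := hdisjF q1 hq1 q3 hq3 h13
    have hd23 := hdisjF q2 hq2 q3 hq3 h23
    have hcard : (q1 ∪ q2 ∪ q3).card = q1.card + q2.card + q3.card := by
      rw [Finset.card_union_of_disjoint (by
        simp only [disjoint_union_left]; exact ⟨hd13, hd23⟩),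
        Finset.card_union_of_disjoint hd12]
    have hlt := hstar' (rep p) (K p q1) (q1 ∪ q2 ∪ q3) ?_ ?_
    · have s1 := hsize2 q1 hq1
      have s2 := hsize2 q2 hq2
      have s3 := hsize2 q3 hq3
      omega
    · intro hmem
      rcases mem_union.mp hmem with h | h
      · rcases mem_union.mp h with h' | h'
        · exact hdisj q1 hq1 p hp (Ne.symm h1) _ h' (hrepmem p hp)
        · exact hdisj q2 hq2 p hp (Ne.symm h2) _ h' (hrepmem p hp)
      · exact hdisj q3 hq3 p hp (Ne.symm h3) _ h (hrepmem p hp)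
    · intro u hu
      rcases mem_union.mp hu with h | h
      · rcases mem_union.mp h with h' | h'
        · exact hKval p hp q1 hq1 h1 _ (hrepmem p hp) u h'
        · rw [e1]; exact hKval p hp q2 hq2 h2 _ (hrepmem p hp) u h'
      · rw [e1, e2]; exact hKval p hp q3 hq3 h3 _ (hrepmem p hp) u h
  -- degree bound in each color
  have hdegle : ∀ p ∈ P.parts, ∀ x : C,
      ((P.parts.erase p).filter (fun q => K p q = x)).card ≤ 2 := by
    intro p hp x
    by_contra hh
    push_neg at hh
    obtain ⟨T, hT, hT3⟩ := Finset.exists_subset_card_eq hh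
    obtain ⟨q1, q2, q3, h12, h13, h23, rfl⟩ := Finset.card_eq_three.mp hT3
    have m1 := hT (by simp : q1 ∈ ({q1, q2, q3} : Finset _))
    have m2 := hT (by simp : q2 ∈ ({q1, q2, q3} : Finset _))
    have m3 := hT (by simp : q3 ∈ ({q1, q2, q3} : Finset _))
    simp only [mem_filter, Finset.mem_erase] at m1 m2 m3
    exact hdeg3 p hp q1 m1.1.2 q2 m2.1.2 q3 m3.1.2
      (Ne.symm m1.1.1) (Ne.symm m2.1.1) (Ne.symm m3.1.1) h12 h13 h23
      (m1.2.trans m2.2.symm) (m2.2.trans m3.2.symm)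
  -- rule out ≥ 6 parts
  have hk5' : P.parts.card ≤ 5 := by
    by_contra h
    push_neg at h
    obtain ⟨p, hp⟩ := Finset.card_pos.mp (show 0 < P.parts.card by omega)
    have hE : 5 ≤ (P.parts.erase p).card := by
      rw [Finset.card_erase_of_mem hp]; omega
    have hred := hdegle p hp i
    have hblue : ((P.parts.erase p).filter (fun q => ¬ K p q = i)).card ≤ 2 := by
      refine le_trans (Finset.card_le_card ?_) (hdegle p hp j)
      intro q hq
      obtain ⟨hq1, hq2⟩ := mem_filter.mp hq
      obtain ⟨hqne, hqmem⟩ := Finset.mem_erase.mp hq1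
      refine mem_filter.mpr ⟨hq1, ?_⟩
      rcases hKij p hp q hqmem (Ne.symm hqne) with h' | h'
      · exact absurd h' hq2
      · exact h'
    have := Finset.card_filter_add_card_filter_not
      (s := P.parts.erase p) (p := fun q => K p q = i)
    omega
  -- total size bound helper
  have hMle4 : ∀ p1 p2 p3 p4 : Finset (Fin M),
      (∀ u : Fin M, u ∈ p1 ∨ u ∈ p2 ∨ u ∈ p3 ∨ u ∈ p4) →
      M ≤ p1.card + p2.card + p3.card + p4.card := by
    intro p1 p2 p3 p4 hcov
    have hsub : (univ : Finset (Fin M)) ⊆ p1 ∪ p2 ∪ p3 ∪ p4 := by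
      intro u _
      simp only [mem_union]
      rcases hcov u with h|h|h|h
      · exact Or.inl (Or.inl (Or.inl h))
      · exact Or.inl (Or.inl (Or.inr h))
      · exact Or.inl (Or.inr h)
      · exact Or.inr h
    calc M = (univ : Finset (Fin M)).card := by rw [card_univ, Fintype.card_fin]
      _ ≤ (p1 ∪ p2 ∪ p3 ∪ p4).card := Finset.card_le_card hsub
      _ ≤ (p1 ∪ p2 ∪ p3).card + p4.card := Finset.card_union_le _ _
      _ ≤ (p1 ∪ p2).card + p3.card + p4.card := by
          have := Finset.card_union_le (p1 ∪ p2) p3; omega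
      _ ≤ p1.card + p2.card + p3.card + p4.card := by
          have := Finset.card_union_le p1 p2; omega
  -- rule out 2 parts
  have hknot2 : P.parts.card ≠ 2 := by
    intro h2
    obtain ⟨p, q, hpq, hpqparts⟩ := Finset.card_eq_two.mp h2
    have hp : p ∈ P.parts := by rw [hpqparts]; simp
    have hq : q ∈ P.parts := by rw [hpqparts]; simp
    have hout : ∀ a ∈ P.parts, ∀ b ∈ P.parts, a ≠ b → (univ \ a).card < n := by
      intro a ha b hb hab
      refine hstar' (rep a) (K a b) _ (by simp [hrepmem a ha]) ?_
      intro u hu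
      obtain ⟨q', hq', huq'⟩ := hpart u
      have hne : a ≠ q' := by
        rintro rfl
        exact (mem_sdiff.mp hu).2 huq'
      have : q' = b := by
        rw [hpqparts] at hq' ha hb
        simp only [mem_insert, mem_singleton] at hq' ha hb
        rcases hq' with rfl | rfl <;> rcases ha with rfl | rfl <;>
          rcases hb with rfl | rfl <;>
          first
          | rfl
          | exact absurd rfl hne
          | exact absurd rfl hab
          | exact absurd rfl hpq
      rw [this] at huq'
      exact hKval a ha b hb hab _ (hrepmem a ha) u huq'
    have h1 := hout p hp q hq hpq
    have h2' := hout q hq p hp (Ne.symm hpq)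
    have e1 := hcardeq p
    have e2 := hcardeq q
    have e3 : p.card + q.card ≤ M := by
      calc p.card + q.card = (p ∪ q).card :=
            (Finset.card_union_of_disjoint (hdisjF p hp q hq hpq)).symm
        _ ≤ (univ : Finset (Fin M)).card := Finset.card_le_univ _
        _ = M := by rw [card_univ, Fintype.card_fin]
    omega
  -- rule out 3 parts
  have hknot3 : P.parts.card ≠ 3 := by
    intro h3
    obtain ⟨p1, p2, p3, h12, h13, h23, hset⟩ := Finset.card_eq_three.mp h3
    have hp1 : p1 ∈ P.parts := by rw [hset]; simp
    have hp2 : p2 ∈ P.parts := by rw [hset]; simp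
    have hp3 : p3 ∈ P.parts := by rw [hset]; simp
    have hcov : ∀ u : Fin M, u ∈ p1 ∨ u ∈ p2 ∨ u ∈ p3 := by
      intro u
      obtain ⟨q, hq, huq⟩ := hpart u
      rw [hset] at hq
      simp only [mem_insert, mem_singleton] at hq
      rcases hq with rfl | rfl | rfl
      · exact Or.inl huq
      · exact Or.inr (Or.inl huq)
      · exact Or.inr (Or.inr huq)
    have center : ∀ a ∈ P.parts, ∀ b ∈ P.parts, ∀ d ∈ P.parts, a ≠ b → a ≠ d → b ≠ d →
        (∀ u : Fin M, u ∈ a ∨ u ∈ b ∨ u ∈ d) → K a b = K a d → False := by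
      intro a ha b hb d hd hab had hbd hcov' he
      have hbd' : b.card + d.card < n := hpair a ha b hb d hd hab had hbd he
      have hsub : (univ \ a).card ≤ b.card + d.card := by
        calc (univ \ a).card ≤ (b ∪ d).card := by
              refine Finset.card_le_card ?_
              intro u hu
              rcases hcov' u with h|h|h
              · exact absurd h (mem_sdiff.mp hu).2
              · exact mem_union_left _ h
              · exact mem_union_right _ h
          _ ≤ b.card + d.card := Finset.card_union_le _ _
      have e1 := hcardeq a
      have han : n ≤ a.card := by omega
      have hrepnb : rep b ∉ a := hdisj b hb a ha (Ne.symm hab) _ (hrepmem b hb)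
      have := hstar' (rep b) (K b a) a hrepnb
        (fun u hu => hKval b hb a ha (Ne.symm hab) _ (hrepmem b hb) u hu)
      omega
    have e12 := hKij p1 hp1 p2 hp2 h12
    have e13 := hKij p1 hp1 p3 hp3 h13
    have e23 := hKij p2 hp2 p3 hp3 h23
    by_cases c1 : K p1 p2 = K p1 p3
    · exact center p1 hp1 p2 hp2 p3 hp3 h12 h13 h23 hcov c1
    by_cases c2 : K p2 p1 = K p2 p3
    · refine center p2 hp2 p1 hp1 p3 hp3 (Ne.symm h12) h23 h13 (fun u => ?_) c2
      rcases hcov u with h|h|h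
      exacts [Or.inr (Or.inl h), Or.inl h, Or.inr (Or.inr h)]
    · have c3 : K p3 p1 = K p3 p2 := by
        rw [hKsymm p3 p1, hKsymm p3 p2]
        rw [hKsymm p2 p1] at c2
        exact pair_eq e12 e13 e23 c1 c2
      refine center p3 hp3 p1 hp1 p2 hp2 (Ne.symm h13) (Ne.symm h23) h12 (fun u => ?_) c3
      rcases hcov u with h|h|h
      exacts [Or.inr (Or.inl h), Or.inr (Or.inr h), Or.inl h]
  -- rule out 4 parts
  have hknot4 : P.parts.card ≠ 4 := by
    intro h4
    obtain ⟨p1, hp1⟩ := Finset.card_pos.mp (show 0 < P.parts.card by omega)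
    have hE3 : (P.parts.erase p1).card = 3 := by
      rw [Finset.card_erase_of_mem hp1, h4]
    obtain ⟨p2, p3, p4, h23, h24, h34, hset⟩ := Finset.card_eq_three.mp hE3
    have hp2' : p2 ∈ P.parts.erase p1 := by rw [hset]; simp
    have hp3' : p3 ∈ P.parts.erase p1 := by rw [hset]; simp
    have hp4' : p4 ∈ P.parts.erase p1 := by rw [hset]; simp
    have hp2 := Finset.mem_of_mem_erase hp2'
    have hp3 := Finset.mem_of_mem_erase hp3'
    have hp4 := Finset.mem_of_mem_erase hp4'
    have h12 : p1 ≠ p2 := Ne.symm (Finset.ne_of_mem_erase hp2')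
    have h13 : p1 ≠ p3 := Ne.symm (Finset.ne_of_mem_erase hp3')
    have h14 : p1 ≠ p4 := Ne.symm (Finset.ne_of_mem_erase hp4')
    have hcov : ∀ u : Fin M, u ∈ p1 ∨ u ∈ p2 ∨ u ∈ p3 ∨ u ∈ p4 := by
      intro u
      obtain ⟨q, hq, huq⟩ := hpart u
      by_cases hq1 : q = p1
      · subst hq1; exact Or.inl huq
      · have : q ∈ P.parts.erase p1 := Finset.mem_erase.mpr ⟨hq1, hq⟩
        rw [hset] at this
        simp only [mem_insert, mem_singleton] at this
        rcases this with rfl | rfl | rfl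
        · exact Or.inr (Or.inl huq)
        · exact Or.inr (Or.inr (Or.inl huq))
        · exact Or.inr (Or.inr (Or.inr huq))
    have hMle := hMle4 p1 p2 p3 p4 hcov
    -- pair facts with symmetry handling
    have pairA : ∀ a ∈ P.parts, ∀ b ∈ P.parts, ∀ d ∈ P.parts,
        a ≠ b → a ≠ d → b ≠ d → K a b = K a d → b.card + d.card < n := hpair
    have pairB : ∀ a ∈ P.parts, ∀ b ∈ P.parts, ∀ d ∈ P.parts,
        a ≠ b → d ≠ b → a ≠ d → K a b = K d b → a.card + d.card < n := by
      intro a ha b hb d hd hab hdb had he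
      refine hpair b hb a ha d hd (Ne.symm hab) (Ne.symm hdb) had ?_
      rw [hKsymm b a, hKsymm b d, ← he]
    rcases cherry4 hijeq (hKij p1 hp1 p2 hp2 h12) (hKij p1 hp1 p3 hp3 h13)
      (hKij p1 hp1 p4 hp4 h14) (hKij p2 hp2 p3 hp3 h23) (hKij p2 hp2 p4 hp4 h24)
      (hKij p3 hp3 p4 hp4 h34) with
      ⟨ha, hb⟩ | ⟨ha, hb⟩ | ⟨ha, hb⟩ | ⟨ha, hb⟩ | ⟨ha, hb⟩ | ⟨ha, hb⟩ | ⟨ha, hb⟩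
    · have s1 : p3.card + p4.card < n := by
        rcases ha with h | h
        · exact pairA p1 hp1 p3 hp3 p4 hp4 h13 h14 h34 h
        · exact pairA p2 hp2 p3 hp3 p4 hp4 h23 h24 h34 h
      have s2 : p1.card + p2.card < n := by
        rcases hb with h | h
        · exact pairB p1 hp1 p3 hp3 p2 hp2 h13 h23 h12 h
        · exact pairB p1 hp1 p4 hp4 p2 hp2 h14 h24 h12 h
      omega
    · have s1 : p2.card + p4.card < n := by
        rcases ha with h | h
        · exact pairA p1 hp1 p2 hp2 p4 hp4 h12 h14 h24 h
        · exact pairB p2 hp2 p3 hp3 p4 hp4 h23 (Ne.symm h34) h24 (h.trans (hKsymm p3 p4))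
      have s2 : p1.card + p3.card < n := by
        rcases hb with h | h
        · exact pairB p1 hp1 p2 hp2 p3 hp3 h12 (Ne.symm h23) h13 (h.trans (hKsymm p2 p3))
        · exact pairB p1 hp1 p4 hp4 p3 hp3 h14 h34 h13 h
      omega
    · have s1 : p2.card + p3.card < n := by
        rcases ha with h | h
        · exact pairA p1 hp1 p2 hp2 p3 hp3 h12 h13 h23 h
        · exact pairB p2 hp2 p4 hp4 p3 hp3 h24 h34 h23 h
      have s2 : p1.card + p4.card < n := by
        rcases hb with h | h
        · exact pairB p1 hp1 p2 hp2 p4 hp4 h12 (Ne.symm h24) h14 (h.trans (hKsymm p2 p4))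
        · exact pairB p1 hp1 p3 hp3 p4 hp4 h13 (Ne.symm h34) h14 (h.trans (hKsymm p3 p4))
      omega
    · exact hdeg3 p1 hp1 p2 hp2 p3 hp3 p4 hp4 h12 h13 h14 h23 h24 h34 ha hb
    · refine hdeg3 p2 hp2 p1 hp1 p3 hp3 p4 hp4 (Ne.symm h12) h23 h24 h13 h14 h34 ?_ ?_
      · rw [hKsymm p2 p1, ← ha]
      · exact hb
    · refine hdeg3 p3 hp3 p1 hp1 p2 hp2 p4 hp4 (Ne.symm h13) (Ne.symm h23) h34
        h12 h14 h24 ?_ ?_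
      · rw [hKsymm p3 p1, hKsymm p3 p2, ← ha]
      · rw [hKsymm p3 p2, ← hb]
    · refine hdeg3 p4 hp4 p1 hp1 p2 hp2 p3 hp3 (Ne.symm h14) (Ne.symm h24)
        (Ne.symm h34) h12 h13 h23 ?_ ?_
      · rw [hKsymm p4 p1, hKsymm p4 p2, ← ha]
      · rw [hKsymm p4 p2, hKsymm p4 p3, ← hb]
  have hk5 : P.parts.card = 5 := by omega
  refine ⟨hk5, fun p hp => by have := hsize2 p hp; omega, i, j, hijeq, hij2, ?_⟩
  intro v
  obtain ⟨p, hp, hvp⟩ := hpart v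
  have hE : (P.parts.erase p).card = 4 := by
    rw [Finset.card_erase_of_mem hp, hk5]
  have hred := hdegle p hp i
  have hblue : ((P.parts.erase p).filter (fun q => ¬ K p q = i)).card ≤ 2 := by
    refine le_trans (Finset.card_le_card ?_) (hdegle p hp j)
    intro q hq
    obtain ⟨hq1, hq2⟩ := mem_filter.mp hq
    obtain ⟨hqne, hqmem⟩ := Finset.mem_erase.mp hq1
    refine mem_filter.mpr ⟨hq1, ?_⟩
    rcases hKij p hp q hqmem (Ne.symm hqne) with h' | h'
    · exact absurd h' hq2
    · exact h'
  have hRB := Finset.card_filter_add_card_filter_not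
    (s := P.parts.erase p) (p := fun q => K p q = i)
  rw [hE] at hRB
  have hR2 : ((P.parts.erase p).filter (fun q => K p q = i)).card = 2 := by omega
  have hB2 : ((P.parts.erase p).filter (fun q => ¬ K p q = i)).card = 2 := by omega
  have mkstar : ∀ (x : C) (q1 q2 : Finset (Fin M)), q1 ≠ q2 →
      q1 ∈ P.parts.erase p → q2 ∈ P.parts.erase p → K p q1 = x → K p q2 = x →
      ∃ S : Finset (Fin M), n - r + 3 ≤ S.card ∧
        ∀ u ∈ S, (∀ p' ∈ P.parts, v ∈ p' → u ∉ p') ∧ c v u = x := by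
    intro x q1 q2 h12 hq1' hq2' e1 e2
    obtain ⟨hq1ne, hq1⟩ := Finset.mem_erase.mp hq1'
    obtain ⟨hq2ne, hq2⟩ := Finset.mem_erase.mp hq2'
    refine ⟨q1 ∪ q2, ?_, ?_⟩
    · have hcard : (q1 ∪ q2).card = q1.card + q2.card :=
        Finset.card_union_of_disjoint (hdisjF q1 hq1 q2 hq2 h12)
      have s1 := hsize2 q1 hq1
      have s2 := hsize2 q2 hq2
      omega
    · intro u hu
      have hmem : ∃ q ∈ P.parts, q ≠ p ∧ u ∈ q ∧ K p q = x := by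
        rcases mem_union.mp hu with h | h
        · exact ⟨q1, hq1, hq1ne, h, e1⟩
        · exact ⟨q2, hq2, hq2ne, h, e2⟩
      obtain ⟨q, hq, hqne, huq, he⟩ := hmem
      constructor
      · intro p' hp' hvp'
        have : p' = p := huniq p' hp' p hp v hvp' hvp
        subst this
        exact hdisj q hq p' hp' hqne u huq
      · rw [hKval p hp q hq (Ne.symm hqne) v hvp u huq, he]
  constructor
  · obtain ⟨q1, q2, h12, hRset⟩ := Finset.card_eq_two.mp hR2
    have m1 : q1 ∈ (P.parts.erase p).filter (fun q => K p q = i) := by rw [hRset]; simp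
    have m2 : q2 ∈ (P.parts.erase p).filter (fun q => K p q = i) := by rw [hRset]; simp
    exact mkstar i q1 q2 h12 (mem_filter.mp m1).1 (mem_filter.mp m2).1
      (mem_filter.mp m1).2 (mem_filter.mp m2).2
  · obtain ⟨q1, q2, h12, hBset⟩ := Finset.card_eq_two.mp hB2
    have m1 : q1 ∈ (P.parts.erase p).filter (fun q => ¬ K p q = i) := by rw [hBset]; simp
    have m2 : q2 ∈ (P.parts.erase p).filter (fun q => ¬ K p q = i) := by rw [hBset]; simp
    have j1 : K p q1 = j := by
      obtain ⟨hq1', hq1ne⟩ := mem_filter.mp m1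
      obtain ⟨hne, hmem⟩ := Finset.mem_erase.mp hq1'
      rcases hKij p hp q1 hmem (Ne.symm hne) with h | h
      · exact absurd h hq1ne
      · exact h
    have j2 : K p q2 = j := by
      obtain ⟨hq2', hq2ne⟩ := mem_filter.mp m2
      obtain ⟨hne, hmem⟩ := Finset.mem_erase.mp hq2'
      rcases hKij p hp q2 hmem (Ne.symm hne) with h | h
      · exact absurd h hq2ne
      · exact h
    exact mkstar j q1 q2 h12 (mem_filter.mp m1).1 (mem_filter.mp m2).1 j1 j2
end

section
/- Let n ≥ 22 be odd and m ≥ 5 with m ≤ (n−8)/6. There exists a 3-edge-coloring of the complete graph on (5n−5)/2 vertices with no rainbow triangle and no monochromatic copy of K_{1,n} ∪ K_{1,m}: partition the vertices into five sets of size (n−1)/2 each, color all edges inside each set with color 1, and color edges between the sets with colors 2 and 3 according to the unique 2-coloring of K_5 with no monochromatic triangle (two complementary 5-cycles). In this coloring no vertex has n or more incident edges of any single color. -/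
open Finset

/-!
Blow up the pentagon/pentagram 2-coloring of `K_5`: replace each vertex by a block of
`(n - 1) / 2` vertices and color every edge inside a block with a third color. A triangle
meets at most three blocks, so it sees the colors of a (possibly degenerate) triangle of
`K_5` with the third color on repeated vertices, and these are never rainbow. A vertex has
`(n - 3) / 2` neighbours of the inner color and `n - 1` of each of the other two colors,
so there is not even a monochromatic `K_{1,n}`.
-/

section BlowUp

variable {V W C : Type*}

theorem IsSymm2.comp {c : W → W → C} (hc : IsSymm2 c) (f : V → W) :
    IsSymm2 fun x y => c (f x) (f y) :=
  fun a b => hc (f a) (f b)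

theorem not_hasRainbowTriangle_comp {c : W → W → C}
    (hc : ∀ a b d : W, ¬ (c a b ≠ c a d ∧ c a b ≠ c b d ∧ c a d ≠ c b d)) (f : V → W) :
    ¬ HasRainbowTriangle fun x y => c (f x) (f y) := by
  rintro ⟨a, b, d, -, -, -, h⟩
  exact hc (f a) (f b) (f d) h

theorem card_filter_comp_le [Fintype V] [Fintype W] [DecidableEq W] [DecidableEq C]
    {c : W → W → C} {f : V → W} {d k : ℕ}
    (hfib : ∀ w, #{u | f u = w} ≤ k) (v : V) (i : C) (hdeg : #{w | c (f v) w = i} ≤ d) :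
    #{u | c (f v) (f u) = i} ≤ d * k := by
  calc #{u | c (f v) (f u) = i}
      ≤ k * #{w | c (f v) w = i} :=
        card_le_mul_card_image_of_maps_to (fun u hu => by simpa using hu) k fun w _ =>
          (card_le_card (filter_subset_filter _ (subset_univ _))).trans (hfib w)
    _ ≤ d * k := (Nat.mul_le_mul_left k hdeg).trans_eq (mul_comm k d)

end BlowUp

theorem HasMonoTwoStars.hasMonoStar {V C : Type*} {c : V → V → C} {n m : ℕ}
    (h : HasMonoTwoStars c n m) : HasMonoStar c n := by
  obtain ⟨i, u, -, S, -, -, hS, -, -, huS, -, -, -, hcS, -⟩ := h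
  exact ⟨i, u, S, hS, huS, hcS⟩

theorem not_hasMonoStar_of_card_lt {V C : Type*} [Fintype V] [DecidableEq V] [DecidableEq C]
    {c : V → V → C} {n : ℕ} (hdeg : ∀ v i, #{u | u ≠ v ∧ c v u = i} < n) :
    ¬ HasMonoStar c n := by
  rintro ⟨i, v, S, rfl, hvS, hcS⟩
  refine (card_le_card fun x hx => ?_).not_gt (hdeg v i)
  simp only [mem_filter, mem_univ, true_and]
  exact ⟨fun h => hvS (h ▸ hx), hcS x hx⟩

theorem Fin.card_filter_divNat_eq_le {m n : ℕ} (a : Fin m) :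
    #{x : Fin (m * n) | x.divNat = a} ≤ n := by
  refine (card_le_card_of_injOn Fin.modNat (fun _ _ => mem_coe.2 (mem_univ _)) ?_).trans_eq
    (card_fin n)
  intro x hx y hy hxy
  simp only [coe_filter, mem_univ, true_and, Set.mem_ofPred_eq] at hx hy
  exact finProdFinEquiv.symm.injective (Prod.ext (hx.trans hy.symm) hxy)

/-- Color `0` on the diagonal becomes the color inside each block; colors `1` and `2` are
the pentagon and the pentagram. -/
def pentagonColoring (i j : Fin 5) : Fin 3 :=
  if i = j then 0 else if (i.val + 1) % 5 = j.val ∨ (j.val + 1) % 5 = i.val then 1 else 2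

theorem pentagonColoring_isSymm2 : IsSymm2 pentagonColoring := by
  unfold IsSymm2; decide

theorem pentagonColoring_not_rainbow : ∀ a b d : Fin 5,
    ¬ (pentagonColoring a b ≠ pentagonColoring a d ∧ pentagonColoring a b ≠ pentagonColoring b d ∧
      pentagonColoring a d ≠ pentagonColoring b d) := by
  decide

theorem card_filter_pentagonColoring_le : ∀ (a : Fin 5) (i : Fin 3),
    #{b | pentagonColoring a b = i} ≤ 2 := by
  decide

theorem lower_construction_small_m_general (n m M : ℕ) (hodd : Odd n) (hM : 2 * M = 5 * n - 5) :
    ∃ c : Fin M → Fin M → Fin 3,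
      IsSymm2 c ∧ ¬ HasRainbowTriangle c ∧ ¬ HasMonoTwoStars c n m ∧
      ∀ (v : Fin M) (i : Fin 3),
        ((Finset.univ : Finset (Fin M)).filter (fun u => u ≠ v ∧ c v u = i)).card < n := by
  obtain ⟨k, rfl⟩ := hodd
  obtain rfl : M = 5 * k := by omega
  have hdeg : ∀ (v : Fin (5 * k)) (i : Fin 3),
      #{u | u ≠ v ∧ pentagonColoring v.divNat u.divNat = i} < 2 * k + 1 := fun v i =>
    calc #{u | u ≠ v ∧ pentagonColoring v.divNat u.divNat = i}
        ≤ #{u : Fin (5 * k) | pentagonColoring v.divNat u.divNat = i} :=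
          card_le_card (monotone_filter_right _ fun _ _ => And.right)
      _ ≤ 2 * k := card_filter_comp_le Fin.card_filter_divNat_eq_le v i
          (card_filter_pentagonColoring_le _ i)
      _ < 2 * k + 1 := Nat.lt_succ_self _
  exact ⟨_, pentagonColoring_isSymm2.comp Fin.divNat,
    not_hasRainbowTriangle_comp pentagonColoring_not_rainbow Fin.divNat,
    fun h => not_hasMonoStar_of_card_lt hdeg h.hasMonoStar, hdeg⟩

/-- Lower-bound construction for odd `n`: a 3-edge-coloring of the complete graph on
`(5n-5)/2` vertices with no rainbow triangle, no monochromatic `K_{1,n} ∪ K_{1,m}`,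
in which moreover no vertex has `n` or more incident edges of any single color. -/
theorem lower_construction_small_m (n m M : ℕ) (hodd : Odd n) (hn : 22 ≤ n)
    (hm : 5 ≤ m) (hmn : 6 * m + 8 ≤ n) (hM : 2 * M = 5 * n - 5) :
    ∃ c : Fin M → Fin M → Fin 3,
      IsSymm2 c ∧ ¬ HasRainbowTriangle c ∧ ¬ HasMonoTwoStars c n m ∧
      ∀ (v : Fin M) (i : Fin 3),
        ((Finset.univ : Finset (Fin M)).filter (fun u => u ≠ v ∧ c v u = i)).card < n :=
  lower_construction_small_m_general n m M hodd hM
end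

section
/- Let G be a k-edge-colored complete graph (k ≥ 3) with no rainbow triangle and no monochromatic copy of K_{1,n} ∪ K_{1,m} (n ≥ m ≥ 1). Let T be a set of vertices such that each vertex of T has all its edges to G∖T in a single color and |G∖T| ≥ n+m. Then for each color i, at most one vertex of T has all edges of color i to G∖T; consequently |T| ≤ k. -/
open Finset

/-- If `G` is a `k`-colored (`k ≥ 3`) rainbow-triangle-free complete graph with no
monochromatic `K_{1,n} ∪ K_{1,m}` (`n ≥ m ≥ 1`), and each vertex of `T` has all its
edges to `G ∖ T` in a single color, with `|G ∖ T| ≥ n + m`, then for each color at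
most one vertex of `T` sends that color to `G ∖ T`; consequently `|T| ≤ k`. -/
theorem T_bound {V : Type*} [Fintype V] [DecidableEq V] (k n m : ℕ) (hk : 3 ≤ k)
    (hm : 1 ≤ m) (hmn : m ≤ n)
    (c : V → V → Fin k) (hsymm : IsSymm2 c) (hrb : ¬ HasRainbowTriangle c)
    (hno : ¬ HasMonoTwoStars c n m)
    (T : Finset V)
    (hT : ∀ v ∈ T, ∃ i : Fin k, ∀ u : V, u ∉ T → c v u = i)
    (hbig : n + m ≤ ((Finset.univ : Finset V) \ T).card) :
    (∀ i : Fin k, ∀ u ∈ T, ∀ v ∈ T,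
      (∀ w : V, w ∉ T → c u w = i) → (∀ w : V, w ∉ T → c v w = i) → u = v) ∧
    T.card ≤ k := by
  classical
  have key : ∀ i : Fin k, ∀ u ∈ T, ∀ v ∈ T,
      (∀ w : V, w ∉ T → c u w = i) → (∀ w : V, w ∉ T → c v w = i) → u = v := by
    intro i u hu v hv hui hvi
    by_contra huv
    obtain ⟨S, hS, hScard⟩ := Finset.exists_subset_card_eq
      (le_trans (Nat.le_add_right n m) hbig)
    have hrest : m ≤ (((Finset.univ : Finset V) \ T) \ S).card := by
      rw [Finset.card_sdiff_of_subset hS, hScard]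
      omega
    obtain ⟨S', hS', hS'card⟩ := Finset.exists_subset_card_eq hrest
    have hS'sub : S' ⊆ (Finset.univ : Finset V) \ T :=
      hS'.trans (Finset.sdiff_subset)
    have hdisj : Disjoint S S' := by
      refine Finset.disjoint_left.mpr fun x hx hx' => ?_
      exact (Finset.mem_sdiff.mp (hS' hx')).2 hx
    have huS : u ∉ S := fun h => (Finset.mem_sdiff.mp (hS h)).2 hu
    have huS' : u ∉ S' := fun h => (Finset.mem_sdiff.mp (hS'sub h)).2 hu
    have hvS : v ∉ S := fun h => (Finset.mem_sdiff.mp (hS h)).2 hv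
    have hvS' : v ∉ S' := fun h => (Finset.mem_sdiff.mp (hS'sub h)).2 hv
    exact hno ⟨i, u, v, S, S', huv, hScard, hS'card, hdisj, huS, huS', hvS, hvS',
      fun x hx => hui x (Finset.mem_sdiff.mp (hS hx)).2,
      fun y hy => hvi y (Finset.mem_sdiff.mp (hS'sub hy)).2⟩
  refine ⟨key, ?_⟩
  have : T.card ≤ (Finset.univ : Finset (Fin k)).card := by
    apply Finset.card_le_card_of_injOn
      (fun v => if h : v ∈ T then (hT v h).choose else ⟨0, by omega⟩)
      (fun _ _ => Finset.mem_univ _)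
    intro a ha b hb hab
    simp only [Finset.mem_coe] at ha hb
    simp only [dif_pos ha, dif_pos hb] at hab
    exact key _ a ha b hb ((hT a ha).choose_spec)
      (hab ▸ (hT b hb).choose_spec)
  simpa using this
end

section
/- Let G be a red/blue/green 3-edge-colored complete graph on N vertices with no monochromatic copy of K_{1,n} ∪ K_{1,m}, where N ≥ 2m + n + m + 2 and every vertex has at most m incident blue edges and at most m incident red edges for two of the colors. Then any two vertices have at least N − 1 − 2m incident green edges each, and if N − 1 − 2m ≥ n + m + 1, G contains a green copy of K_{1,n} ∪ K_{1,m}, a contradiction; hence no such G exists when N ≥ n + 3m + 2. -/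
open Finset

theorem Finset.exists_subset_sdiff_card_eq {α : Type*} [DecidableEq α] {A B : Finset α} {n : ℕ}
    (h : n + #B ≤ #A) : ∃ S ⊆ A \ B, #S = n :=
  exists_subset_card_eq <| by have := le_card_sdiff B A; omega

section ColorNeighborhood

variable {V C : Type*} [Fintype V] [DecidableEq V] [DecidableEq C]

def colorNbhd (c : V → V → C) (v : V) (i : C) : Finset V :=
  univ.filter fun u => u ≠ v ∧ c v u = i

@[simp]
theorem mem_colorNbhd {c : V → V → C} {v u : V} {i : C} :
    u ∈ colorNbhd c v i ↔ u ≠ v ∧ c v u = i := by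
  simp [colorNbhd]

theorem sum_card_colorNbhd [Fintype C] (c : V → V → C) (v : V) :
    ∑ i, #(colorNbhd c v i) = Fintype.card V - 1 := by
  rw [← card_univ, ← card_erase_of_mem (mem_univ v),
    card_eq_sum_card_fiberwise (f := c v) (t := univ) fun _ _ => mem_univ _]
  simp only [colorNbhd, filter_filter, ← filter_ne']

theorem sub_le_card_colorNbhd_two (c : V → V → Fin 3) (v : V) {m : ℕ}
    (hred : #(colorNbhd c v 0) ≤ m) (hblue : #(colorNbhd c v 1) ≤ m) :
    Fintype.card V - 1 - 2 * m ≤ #(colorNbhd c v 2) := by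
  have := sum_card_colorNbhd c v
  rw [Fin.sum_univ_three] at this
  omega

/-- Greedy choice: the first star avoids the second centre, the second star avoids the first
star together with its centre. -/
theorem exists_disjoint_stars {c : V → V → C} {i : C} {u v : V} {n m : ℕ}
    (hu : n + 1 ≤ #(colorNbhd c u i)) (hv : m + (n + 1) ≤ #(colorNbhd c v i)) :
    ∃ S T : Finset V, #S = n ∧ #T = m ∧ Disjoint S T ∧ u ∉ S ∧ u ∉ T ∧ v ∉ S ∧ v ∉ T ∧
      (∀ x ∈ S, c u x = i) ∧ (∀ y ∈ T, c v y = i) := by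
  obtain ⟨S, hS, hSn⟩ := exists_subset_sdiff_card_eq (B := {v}) (n := n) (by simpa using hu)
  obtain ⟨T, hT, hTm⟩ := exists_subset_sdiff_card_eq (B := insert u S) (n := m)
    (hv.trans' <| by have := card_insert_le u S; omega)
  simp only [subset_iff, mem_sdiff, mem_colorNbhd, mem_insert, mem_singleton] at hS hT
  refine ⟨S, T, hSn, hTm, disjoint_right.mpr fun y hy => (hT hy).2 ∘ Or.inr,
    fun h => (hS h).1.1 rfl, fun h => (hT h).2 (Or.inl rfl), fun h => (hS h).2 rfl,
    fun h => (hT h).1.1 rfl, fun x hx => (hS hx).1.2, fun y hy => (hT hy).1.2⟩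

theorem exists_disjoint_stars_of_forall_le_card [Nontrivial V] {c : V → V → C} {i : C}
    {n m : ℕ} (h : ∀ v, n + m + 1 ≤ #(colorNbhd c v i)) :
    ∃ (u v : V) (S T : Finset V), u ≠ v ∧ #S = n ∧ #T = m ∧ Disjoint S T ∧
      u ∉ S ∧ u ∉ T ∧ v ∉ S ∧ v ∉ T ∧ (∀ x ∈ S, c u x = i) ∧ (∀ y ∈ T, c v y = i) := by
  obtain ⟨u, v, huv⟩ := exists_pair_ne V
  obtain ⟨S, T, hST⟩ := exists_disjoint_stars (n := n) (m := m) ((h u).trans' (by omega))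
    ((h v).trans' (by omega))
  exact ⟨u, v, S, T, huv, hST⟩

end ColorNeighborhood

theorem no_green_free_coloring_general (n m N : ℕ) (hN : n + 3 * m + 2 ≤ N)
    (c : Fin N → Fin N → Fin 3)
    (hred : ∀ v : Fin N,
      ((Finset.univ : Finset (Fin N)).filter (fun u => u ≠ v ∧ c v u = 0)).card ≤ m)
    (hblue : ∀ v : Fin N,
      ((Finset.univ : Finset (Fin N)).filter (fun u => u ≠ v ∧ c v u = 1)).card ≤ m) :
    (∀ v : Fin N, N - 1 - 2 * m ≤
      ((Finset.univ : Finset (Fin N)).filter (fun u => u ≠ v ∧ c v u = 2)).card) ∧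
    (∃ (u v : Fin N) (S T : Finset (Fin N)), u ≠ v ∧ S.card = n ∧ T.card = m ∧
      Disjoint S T ∧ u ∉ S ∧ u ∉ T ∧ v ∉ S ∧ v ∉ T ∧
      (∀ x ∈ S, c u x = 2) ∧ (∀ y ∈ T, c v y = 2)) ∧
    HasMonoTwoStars c n m := by
  have green (v : Fin N) : N - 1 - 2 * m ≤ #(colorNbhd c v 2) := by
    simpa using sub_le_card_colorNbhd_two c v (hred v) (hblue v)
  have : Nontrivial (Fin N) := Fin.nontrivial_iff_two_le.mpr (by omega)
  have stars := exists_disjoint_stars_of_forall_le_card (i := 2) (n := n) (m := m)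
    fun v => (green v).trans' (by omega)
  exact ⟨green, stars, 2, stars⟩

/-- If in a 3-coloring (red = 0, blue = 1, green = 2) of `K_N` with `N ≥ n + 3m + 2`
every vertex has at most `m` incident red edges and at most `m` incident blue edges,
then every vertex has at least `N - 1 - 2m` incident green edges, and since
`N - 1 - 2m ≥ n + m + 1` there is a green copy of `K_{1,n} ∪ K_{1,m}`; hence no such
coloring can avoid a monochromatic `K_{1,n} ∪ K_{1,m}`. -/
theorem no_green_free_coloring (n m N : ℕ) (hN : n + 3 * m + 2 ≤ N)
    (c : Fin N → Fin N → Fin 3) (hsymm : IsSymm2 c)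
    (hred : ∀ v : Fin N,
      ((Finset.univ : Finset (Fin N)).filter (fun u => u ≠ v ∧ c v u = 0)).card ≤ m)
    (hblue : ∀ v : Fin N,
      ((Finset.univ : Finset (Fin N)).filter (fun u => u ≠ v ∧ c v u = 1)).card ≤ m) :
    (∀ v : Fin N, N - 1 - 2 * m ≤
      ((Finset.univ : Finset (Fin N)).filter (fun u => u ≠ v ∧ c v u = 2)).card) ∧
    (∃ (u v : Fin N) (S T : Finset (Fin N)), u ≠ v ∧ S.card = n ∧ T.card = m ∧
      Disjoint S T ∧ u ∉ S ∧ u ∉ T ∧ v ∉ S ∧ v ∉ T ∧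
      (∀ x ∈ S, c u x = 2) ∧ (∀ y ∈ T, c v y = 2)) ∧
    HasMonoTwoStars c n m :=
  no_green_free_coloring_general n m N hN c hred hblue
end
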